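/- Let q be an odd prime power, F_q the finite field with q elements. Let a, b, c, A, B, C, D ∈ F_q with c ≠ 0 and A ≠ 0, and define g(x) = x³ + a x² + b x + c, h(x) = (A−1) x³ + B x² + C x + D, f(x,t) = x³ t² + 2 g(x) t − h(x), and D_T(x) = g(x)² + x³ h(x). Suppose D_T(x) = A·∏_{i=1}^{6} (x − ρ_i) where ρ_1, …, ρ_6 are six distinct elements of F_q, each of which is a nonzero square in F_q. For each t ∈ F_q let N_t = #{(x, y) ∈ F_q × F_q : y² = f(x, t)}. Then ∑_{t ∈ F_q} (q − N_t) = −6q; equivalently, the average over t ∈ F_q of the quantities a_t = q − N_t equals −6. -/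

import Mathlib

/-!
Write `χ` for the quadratic character of `F`. Counting square roots gives
`N t = q + ∑ₓ χ (f x t)`, so `∑ₜ (q - N t) = -∑ₓ ∑ₜ χ (f x t)`. For `x ≠ 0`, `t ↦ f x t` is a
quadratic polynomial with leading coefficient `x³` and discriminant `4 D_T(x)`, and the classical
evaluation of `∑ₜ χ (α t² + β t + γ)` makes the inner sum `(q - 1) χ(x)` at the roots of `D_T`
and `-χ(x)` elsewhere; for `x = 0` it is linear in `t` with slope `2c ≠ 0` and vanishes. Since
`∑ₓ χ(x) = 0`, what remains is `q ∑ᵢ χ(ρᵢ) = 6q`.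
-/

open Finset

lemma ringChar_ne_two_of_odd_card {F : Type*} [Field F] [Fintype F]
    (h : Odd (Fintype.card F)) : ringChar F ≠ 2 := fun h2 => by
  have := FiniteField.even_card_of_char_two h2
  rw [Nat.odd_iff] at h
  omega

section QuadraticCharSums

variable {F : Type*} [Field F] [Fintype F] [DecidableEq F]

lemma card_filter_sq_eq (hF : ringChar F ≠ 2) (u : F) :
    (#{t : F | t ^ 2 = u} : ℤ) = quadraticChar F u + 1 := by
  rw [← quadraticChar_card_sqrts hF u, Set.toFinset_ofPred]

lemma sum_quadraticChar_affine (hF : ringChar F ≠ 2) {β : F} (hβ : β ≠ 0) (δ : F) :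
    ∑ u : F, quadraticChar F (β * u + δ) = 0 := by
  rw [← quadraticChar_sum_zero hF]
  exact ((Equiv.mulLeft₀ β hβ).trans (Equiv.addRight δ)).sum_comp (quadraticChar F)

lemma sum_comp_sq (hF : ringChar F ≠ 2) (φ : F → ℤ) :
    ∑ t : F, φ (t ^ 2) = ∑ u : F, (quadraticChar F u + 1) * φ u := by
  rw [← sum_fiberwise univ (· ^ 2)]
  refine sum_congr rfl fun u _ => ?_
  rw [sum_congr rfl fun t ht => congrArg φ (mem_filter.mp ht).2, sum_const, nsmul_eq_mul,
    card_filter_sq_eq hF]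

lemma sum_quadraticChar_mul_affine (hF : ringChar F ≠ 2) (α γ : F) :
    ∑ u : F, quadraticChar F u * quadraticChar F (α * u + γ) =
      if γ = 0 then (Fintype.card F - 1) * quadraticChar F α else -quadraticChar F α := by
  have hinv : ∀ u : F, quadraticChar F u * quadraticChar F (α * u + γ) =
      quadraticChar F (α + γ * u⁻¹) - if u = 0 then quadraticChar F α else 0 := by
    intro u
    rcases eq_or_ne u 0 with rfl | hu
    · simp
    · rw [← map_mul, if_neg hu, sub_zero, show u * (α * u + γ) = u ^ 2 * (α + γ * u⁻¹) by
        field_simp, map_mul, quadraticChar_sq_one' hu, one_mul]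
  simp only [hinv, sum_sub_distrib, sum_ite_eq', mem_univ, if_true]
  rw [Fintype.sum_bijective _ inv_involutive.bijective _ (fun w => quadraticChar F (α + γ * w))
    fun _ => rfl]
  split_ifs with hγ
  · simp only [hγ, zero_mul, add_zero, sum_const, card_univ, nsmul_eq_mul]
    ring
  · simp_rw [add_comm α, sum_quadraticChar_affine hF hγ]
    ring

lemma sum_quadraticChar_sq_add (hF : ringChar F ≠ 2) {α : F} (hα : α ≠ 0) (γ : F) :
    ∑ t : F, quadraticChar F (α * t ^ 2 + γ) =
      if γ = 0 then (Fintype.card F - 1) * quadraticChar F α else -quadraticChar F α := by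
  rw [sum_comp_sq hF fun u => quadraticChar F (α * u + γ), ← sum_quadraticChar_mul_affine hF]
  simp only [add_mul, one_mul, sum_add_distrib, sum_quadraticChar_affine hF hα, add_zero]

lemma sum_quadraticChar_quadratic (hF : ringChar F ≠ 2) {α : F} (hα : α ≠ 0) (β γ : F) :
    ∑ t : F, quadraticChar F (α * t ^ 2 + β * t + γ) =
      if β ^ 2 - 4 * α * γ = 0 then (Fintype.card F - 1) * quadraticChar F α
      else -quadraticChar F α := by
  have h2 : (2 : F) ≠ 0 := Ring.two_ne_zero hF
  have h4 : (4 : F) ≠ 0 := by rw [show (4 : F) = 2 ^ 2 by norm_num]; exact pow_ne_zero 2 h2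
  have hsq : ∀ t, α * t ^ 2 + β * t + γ =
      α * (t + β / (2 * α)) ^ 2 + -(β ^ 2 - 4 * α * γ) / (4 * α) := by
    intro t; field_simp; ring
  simp_rw [hsq]
  rw [Fintype.sum_bijective _ (add_left_injective _).bijective_of_finite _
      (fun s => quadraticChar F (α * s ^ 2 + -(β ^ 2 - 4 * α * γ) / (4 * α))) fun _ => rfl,
    sum_quadraticChar_sq_add hF hα]
  simp only [neg_div, neg_eq_zero, div_eq_zero_iff, mul_eq_zero, h4, hα, or_self, or_false]

lemma natCard_sq_eq_card_add_sum_quadraticChar (hF : ringChar F ≠ 2) (φ : F → F) :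
    (Nat.card {p : F × F // p.2 ^ 2 = φ p.1} : ℤ) =
      Fintype.card F + ∑ x : F, quadraticChar F (φ x) := by
  rw [Nat.card_congr (Equiv.subtypeProdEquivSigmaSubtype fun x y => y ^ 2 = φ x),
    Nat.card_eq_fintype_card, Fintype.card_sigma, Nat.cast_sum]
  simp only [Fintype.card_subtype, card_filter_sq_eq hF, sum_add_distrib, sum_const, card_univ,
    nsmul_one]
  ring

lemma sum_quadraticChar_pencil (hF : ringChar F ≠ 2) (G H : F → F) (hG : G 0 ≠ 0) (x : F) :
    ∑ t : F, quadraticChar F (x ^ 3 * t ^ 2 + 2 * G x * t - H x) =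
      (if x ≠ 0 ∧ G x ^ 2 + x ^ 3 * H x = 0 then Fintype.card F * quadraticChar F x else 0) -
        quadraticChar F x := by
  rcases eq_or_ne x 0 with rfl | hx
  · simp only [ne_eq, not_true_eq_false, false_and, if_false, quadraticChar_zero,
      zero_pow three_ne_zero, zero_mul, zero_add, sub_eq_add_neg]
    exact sum_quadraticChar_affine hF (mul_ne_zero (Ring.two_ne_zero hF) hG) _
  have hχx : quadraticChar F (x ^ 3) = quadraticChar F x := by
    rw [pow_succ, map_mul, quadraticChar_sq_one' hx, one_mul]
  have hdisc : (2 * G x) ^ 2 - 4 * x ^ 3 * -H x = 0 ↔ G x ^ 2 + x ^ 3 * H x = 0 := by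
    rw [show (2 * G x) ^ 2 - 4 * x ^ 3 * -H x = 4 * (G x ^ 2 + x ^ 3 * H x) by ring,
      mul_eq_zero, or_iff_right]
    rw [show (4 : F) = 2 ^ 2 by norm_num]
    exact pow_ne_zero 2 (Ring.two_ne_zero hF)
  simp_rw [sub_eq_add_neg (_ + _)]
  rw [sum_quadraticChar_quadratic hF (pow_ne_zero 3 hx), hχx]
  by_cases hD : G x ^ 2 + x ^ 3 * H x = 0
  · rw [if_pos (hdisc.mpr hD), if_pos ⟨hx, hD⟩]
    ring
  · rw [if_neg (mt hdisc.mp hD), if_neg fun h => hD h.2]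
    ring

end QuadraticCharSums

theorem average_trace_of_frobenius_rank_six_family_general (q : ℕ) (hq : Odd q)
    (F : Type*) [Field F] [Fintype F] [DecidableEq F] (hcard : Fintype.card F = q)
    (a b c A : F) (hc : c ≠ 0) (hA : A ≠ 0)
    (g h : F → F) (f : F → F → F)
    (hg : ∀ x, g x = x ^ 3 + a * x ^ 2 + b * x + c)
    (hf : ∀ x t, f x t = x ^ 3 * t ^ 2 + 2 * g x * t - h x)
    (ρ : Fin 6 → F) (hinj : Function.Injective ρ)
    (hρ : ∀ i, ρ i ≠ 0 ∧ IsSquare (ρ i))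
    (hDT : ∀ x, (g x) ^ 2 + x ^ 3 * h x = A * ∏ i, (x - ρ i))
    (N : F → ℕ)
    (hN : ∀ t, N t = Nat.card {p : F × F // p.2 ^ 2 = f p.1 t}) :
    ∑ t : F, ((q : ℤ) - N t) = -6 * q ∧
    (∑ t : F, ((q : ℤ) - N t)) / q = -6 := by
  subst hcard
  have hF : ringChar F ≠ 2 := ringChar_ne_two_of_odd_card hq
  have hroots : ∀ x, (x ≠ 0 ∧ g x ^ 2 + x ^ 3 * h x = 0) ↔ x ∈ univ.image ρ := by
    intro x
    simp only [hDT, mul_eq_zero, hA, false_or, prod_eq_zero_iff, sub_eq_zero, mem_univ, true_and,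
      mem_image]
    exact ⟨fun ⟨_, i, hi⟩ => ⟨i, hi.symm⟩, fun ⟨i, hi⟩ => ⟨hi ▸ (hρ i).1, i, hi.symm⟩⟩
  have hsum : ∑ t : F, ((Fintype.card F : ℤ) - N t) = -6 * Fintype.card F := by
    calc ∑ t : F, ((Fintype.card F : ℤ) - N t)
        = -∑ x : F, ∑ t : F, quadraticChar F (x ^ 3 * t ^ 2 + 2 * g x * t - h x) := by
          have hpoints : ∀ t, (N t : ℤ) = Fintype.card F + ∑ x : F, quadraticChar F (f x t) :=
            fun t => (hN t).symm ▸ natCard_sq_eq_card_add_sum_quadraticChar hF (f · t)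
          simp_rw [hpoints, hf, sub_add_cancel_left, sum_neg_distrib]
          rw [sum_comm]
      _ = -∑ x ∈ univ.image ρ, Fintype.card F * quadraticChar F x := by
          simp_rw [sum_quadraticChar_pencil hF g h (by simpa [hg] using hc), sum_sub_distrib,
            quadraticChar_sum_zero hF, sub_zero, ← sum_filter, hroots, filter_mem_eq_inter,
            univ_inter]
      _ = -6 * Fintype.card F := by
          rw [sum_image hinj.injOn]
          simp only [(quadraticChar_one_iff_isSquare (hρ _).1).mpr (hρ _).2, mul_one, sum_const,
            card_univ, Fintype.card_fin, nsmul_eq_mul]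
          push_cast
          ring
  refine ⟨hsum, ?_⟩
  rw [hsum, Int.mul_ediv_cancel _ (by exact_mod_cast hq.pos.ne')]

/-- **The average trace of Frobenius of the rank-6 family is `-6`.**
Let `q` be an odd prime power and `F` the finite field with `q` elements.
Given `a b c A B C D : F` with `c ≠ 0` and `A ≠ 0`, set
`g x = x³ + a x² + b x + c`, `h x = (A - 1) x³ + B x² + C x + D`,
`f x t = x³ t² + 2 g(x) t − h(x)` and `D_T x = (g x)² + x³ * h x`.  If
`D_T x = A * ∏ i, (x - ρ i)` for six distinct `ρ 1, …, ρ 6 ∈ F`, each a nonzero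
square in `F`, and `N t` denotes the number of points `(x, y) ∈ F × F` with
`y² = f x t`, then `∑ t, (q - N t) = -6 q`; i.e., the average over `t ∈ F` of
the quantities `a_t = q - N t` equals `-6`. -/
theorem average_trace_of_frobenius_rank_six_family (q : ℕ) (hq : Odd q)
    (F : Type*) [Field F] [Fintype F] [DecidableEq F] (hcard : Fintype.card F = q)
    (a b c A B C D : F) (hc : c ≠ 0) (hA : A ≠ 0)
    (g h : F → F) (f : F → F → F)
    (hg : ∀ x, g x = x ^ 3 + a * x ^ 2 + b * x + c)
    (hh : ∀ x, h x = (A - 1) * x ^ 3 + B * x ^ 2 + C * x + D)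
    (hf : ∀ x t, f x t = x ^ 3 * t ^ 2 + 2 * g x * t - h x)
    (ρ : Fin 6 → F) (hinj : Function.Injective ρ)
    (hρ : ∀ i, ρ i ≠ 0 ∧ IsSquare (ρ i))
    (hDT : ∀ x, (g x) ^ 2 + x ^ 3 * h x = A * ∏ i, (x - ρ i))
    (N : F → ℕ)
    (hN : ∀ t, N t = Nat.card {p : F × F // p.2 ^ 2 = f p.1 t}) :
    ∑ t : F, ((q : ℤ) - N t) = -6 * q ∧
    (∑ t : F, ((q : ℤ) - N t)) / q = -6 :=
  average_trace_of_frobenius_rank_six_family_general q hq F hcard a b c A hc hA g h f hg hf ρ hinj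
    hρ hDT N hN
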